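/- arXiv:1703.03799 — 2 statements merged into one kernel-verified Lean document; each statement's English description precedes it below -/
import Mathlib

section
/- If G is a checkerboard-colored graph on the torus in which every vertex is incident to an odd number of red faces and an odd number of blue faces, and G contains an A-trail, then the total number of red faces or the total number of blue faces is odd. -/
/-- Parity obstruction to A-trails in checkerboard-colored torus graphs.
Faces (`Fc`) are colored red/blue by `color : Fc → Bool`; `N x v` is the set of
faces of color `x` incident to the vertex `v`, and each vertex is incident to an
odd number of faces of each color.  An A-trail yields (by the covering-tree
characterization) a color `x` and a set `U` of vertices whose neighborhoods cover
all faces of color `x` and whose union forms a tree, i.e. the bipartite incidence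
count satisfies `∑_{v ∈ U} |N x v| + 1 = |U| + |⋃_{v ∈ U} N x v|`.
Then the number of red faces or the number of blue faces is odd. -/
theorem checkerboard_atrail_parity {V Fc : Type} [Fintype V] [Fintype Fc]
    [DecidableEq V] [DecidableEq Fc]
    (color : Fc → Bool) (N : Bool → V → Finset Fc)
    (hsub : ∀ (x : Bool) (v : V), ∀ f ∈ N x v, color f = x)
    (hodd : ∀ (x : Bool) (v : V), Odd (N x v).card)
    (hAtrail : ∃ (x : Bool) (U : Finset V),
      (∀ f : Fc, color f = x → f ∈ U.biUnion (N x)) ∧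
      (∑ v ∈ U, (N x v).card) + 1 = U.card + (U.biUnion (N x)).card) :
    Odd (Finset.univ.filter fun f : Fc => color f = true).card ∨
      Odd (Finset.univ.filter fun f : Fc => color f = false).card := by
  obtain ⟨x, U, hcov, heq⟩ := hAtrail
  have hBU : U.biUnion (N x) = Finset.univ.filter fun f : Fc => color f = x := by
    ext f
    simp only [Finset.mem_biUnion, Finset.mem_filter, Finset.mem_univ, true_and]
    constructor
    · rintro ⟨v, _, hf⟩; exact hsub x v f hf
    · intro hf
      have := hcov f hf
      simpa using this
  have hpar : (∑ v ∈ U, (N x v).card) % 2 = U.card % 2 := by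
    rw [Finset.sum_nat_mod]
    have : ∀ v ∈ U, (N x v).card % 2 = 1 := fun v _ => Nat.odd_iff.mp (hodd x v)
    rw [Finset.sum_congr rfl this, Finset.sum_const, smul_eq_mul, mul_one]
  have hOdd : Odd (U.biUnion (N x)).card := by
    rw [Nat.odd_iff]; omega
  rw [hBU] at hOdd
  cases x
  · exact Or.inr hOdd
  · exact Or.inl hOdd
end

section
/- In a 6-regular graph cellularly embedded on the torus in which every face is a triangle, starting at any vertex and repeatedly taking the edge two positions away in the cyclic rotation (a straight-ahead walk) returns to the starting vertex traversing each visited vertex consistently, i.e., straight-ahead walks close up into cycles partitioning the edge set into edge-disjoint closed straight-ahead walks in each of the three directions. -/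
/-- Straight-ahead walks in a 6-regular torus triangulation close up.  In the dart
model, `θ` is the fixed-point-free edge involution and `σ` the rotation permuting the
6 darts at each vertex (`σ^[6] = id`, `σ` preserves the vertex).  The straight-ahead
successor of a dart `d` is obtained by crossing its edge and turning to the opposite
dart `σ³ (θ d)` ("the edge two positions away": two other edges on each side).
Every dart returns to itself after finitely many straight-ahead steps, so the
straight-ahead transition system partitions the darts (hence the edges) into
edge-disjoint closed straight-ahead walks. -/
theorem straight_ahead_walks_close_up {D V : Type} [Fintype D]
    (vertexOf : D → V) (θ σ : D → D)
    (hθinv : ∀ d, θ (θ d) = d) (hθne : ∀ d, θ d ≠ d)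
    (hσv : ∀ d, vertexOf (σ d) = vertexOf d)
    (hσ6 : ∀ d, σ^[6] d = d) (hσbij : Function.Bijective σ) :
    ∀ d : D, ∃ n : ℕ, 0 < n ∧ (fun x => σ (σ (σ (θ x))))^[n] d = d := by
  intro d
  set f : D → D := fun x => σ (σ (σ (θ x))) with hf
  have hθinj : Function.Injective θ :=
    Function.LeftInverse.injective (g := θ) hθinv
  have hfinj : Function.Injective f := by
    intro a b hab
    exact hθinj (hσbij.1 (hσbij.1 (hσbij.1 hab)))
  -- pigeonhole: among iterates f^[0] d, ..., f^[card D] d, two coincide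
  have hni : ¬ Function.Injective (fun n : Fin (Fintype.card D + 1) => f^[(n : ℕ)] d) := by
    intro hinj
    have := Fintype.card_le_of_injective _ hinj
    simp at this
  rw [Function.not_injective_iff] at hni
  obtain ⟨a, b, hab, hne⟩ := hni
  wlog hlt : (b : ℕ) < (a : ℕ) generalizing a b
  · exact this b a hab.symm (Ne.symm hne)
      (lt_of_le_of_ne (not_lt.mp hlt) (fun h => hne (Fin.ext h)))
  refine ⟨(a : ℕ) - (b : ℕ), Nat.sub_pos_of_lt hlt, ?_⟩
  have key : f^[(a : ℕ) - (b : ℕ)] (f^[(b : ℕ)] d) = f^[(b : ℕ)] d := by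
    rw [← Function.iterate_add_apply, Nat.sub_add_cancel hlt.le]
    exact hab
  have : Function.Injective (f^[(b : ℕ)]) := hfinj.iterate _
  apply this
  rw [← Function.iterate_add_apply, Nat.add_comm, Function.iterate_add_apply]
  exact key
end
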